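/- The integral ∫_ν^∞ exp(-(Δ²/2)·(√x - √ν)²) dx equals 2/Δ² + √(2πν)/Δ for all Δ > 0 and ν ≥ 0. -/

import Mathlib

open Real MeasureTheory Set

/-! The substitution `x = (s + √ν)²` turns the integral into
`∫₀^∞ 2 (s + √ν) exp(-(Δ²/2) s²) ds`, a combination of the first and zeroth moments of a
half-line Gaussian, which are `1/Δ²` and `√(2π)/(2Δ)`. -/

theorem integral_mul_exp_neg_mul_sq {b : ℝ} (hb : 0 < b) :
    ∫ x in Ioi (0 : ℝ), x * exp (-b * x ^ 2) = (2 * b)⁻¹ := by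
  rw [← Complex.ofReal_inj, ← integral_complex_ofReal]
  push_cast
  exact integral_mul_cexp_neg_mul_sq (by simpa)

theorem integral_Ioi_sq_eq_integral_Ioi_comp_add_sq {E : Type*} [NormedAddCommGroup E]
    [NormedSpace ℝ E] (g : ℝ → E) {c : ℝ} (hc : 0 ≤ c) :
    ∫ x in Ioi (c ^ 2), g x = ∫ s in Ioi 0, (2 * (s + c)) • g ((s + c) ^ 2) := by
  have himage : (fun s => (s + c) ^ 2) '' Ioi 0 = Ioi (c ^ 2) := by
    ext x
    constructor
    · rintro ⟨s, hs, rfl⟩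
      exact pow_lt_pow_left₀ (lt_add_of_pos_left c hs) hc two_ne_zero
    · intro hx
      refine ⟨√x - c, ?_, ?_⟩
      · simpa [lt_sqrt hc] using hx
      · simpa using sq_sqrt ((sq_nonneg c).trans (mem_Ioi.1 hx).le)
  have hderiv : ∀ s ∈ Ioi (0 : ℝ),
      HasDerivWithinAt (fun s => (s + c) ^ 2) (2 * (s + c)) (Ioi 0) s := fun s _ => by
    simpa using (((hasDerivAt_id s).add_const c).fun_pow 2).hasDerivWithinAt
  have hinj : InjOn (fun s => (s + c) ^ 2) (Ioi 0) := fun s hs t ht hst => by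
    have hs : 0 ≤ s + c := by linarith [mem_Ioi.1 hs]
    have ht : 0 ≤ t + c := by linarith [mem_Ioi.1 ht]
    simpa using (sq_eq_sq₀ hs ht).1 hst
  rw [← himage, integral_image_eq_integral_abs_deriv_smul measurableSet_Ioi hderiv hinj]
  refine setIntegral_congr_fun measurableSet_Ioi fun s hs => ?_
  have hs : 0 < s := hs
  rw [abs_of_pos (by positivity)]

/-- `∫_ν^∞ exp(-(Δ²/2)·(√x - √ν)²) dx = 2/Δ² + √(2πν)/Δ` for all `Δ > 0` and `ν ≥ 0`. -/
theorem integral_sqrt_gaussian (Δ ν : ℝ) (hΔ : 0 < Δ) (hν : 0 ≤ ν) :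
    ∫ x in Set.Ioi ν, Real.exp (-(Δ ^ 2 / 2) * (Real.sqrt x - Real.sqrt ν) ^ 2) =
      2 / Δ ^ 2 + Real.sqrt (2 * π * ν) / Δ := by
  have hb : 0 < Δ ^ 2 / 2 := by positivity
  have hsubst := integral_Ioi_sq_eq_integral_Ioi_comp_add_sq
    (fun x => exp (-(Δ ^ 2 / 2) * (√x - √ν) ^ 2)) (sqrt_nonneg ν)
  rw [sq_sqrt hν] at hsubst
  have hintegrand : ∀ s ∈ Ioi (0 : ℝ),
      (2 * (s + √ν)) • exp (-(Δ ^ 2 / 2) * (√((s + √ν) ^ 2) - √ν) ^ 2) =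
        2 * (s * exp (-(Δ ^ 2 / 2) * s ^ 2)) + 2 * √ν * exp (-(Δ ^ 2 / 2) * s ^ 2) := by
    intro s hs
    rw [sqrt_sq (by have := mem_Ioi.1 hs; positivity), add_sub_cancel_right, smul_eq_mul]
    ring
  rw [hsubst, setIntegral_congr_fun measurableSet_Ioi hintegrand, integral_add, integral_const_mul,
    integral_const_mul, integral_mul_exp_neg_mul_sq hb, integral_gaussian_Ioi]
  · rw [sqrt_mul (by positivity), div_div_eq_mul_div, sqrt_div' _ (by positivity), sqrt_sq hΔ.le]
    field_simp
  · exact ((integrable_mul_exp_neg_mul_sq hb).integrableOn).const_mul 2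
  · exact ((integrable_exp_neg_mul_sq hb).integrableOn).const_mul _
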